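/- For every m ≥ 1 and every p ≥ 1, the p-th return word of the envelope word E_{2,m} in the period-doubling sequence D satisfies: r_p(E_{2,m}) = A_{m−1} if Θ_2[p] = a, r_p(E_{2,m}) = A_{m−1} A_m B_{m+1} if Θ_2[p] = b, and r_p(E_{2,m}) = B_m B_{m−1} if Θ_2[p] = c. In other words, the return word sequence {r_p(E_{2,m})}_{p≥1} is the sequence Θ_2 over the alphabet {A_{m−1}, A_{m−1}A_mB_{m+1}, B_mB_{m−1}}. -/

import Mathlib

/-- The alphabet: letters a, b (for the period-doubling sequence) and c (used by Θ₂). -/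
inductive Letter : Type
  | a | b | c
deriving DecidableEq, Repr

open Letter

/-- The period-doubling substitution σ : a ↦ ab, b ↦ aa, extended to words
(the extra letter c is left untouched; it is never produced). -/
def sigmaw : List Letter → List Letter :=
  fun w => w.flatMap fun x => match x with
    | .a => [.a, .b]
    | .b => [.a, .a]
    | .c => [.c]

/-- A_m = σ^m(a). -/
def A (m : ℕ) : List Letter := sigmaw^[m] [.a]

/-- B_m = σ^m(b). -/
def B (m : ℕ) : List Letter := sigmaw^[m] [.b]

/-- δ_m, the last letter of A_m. -/
def delta (m : ℕ) : Letter := (A m).getLastD .a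

/-- The period-doubling sequence D, as a function giving its (n+1)-st letter
(0-indexed); it is the fixed point of σ beginning with a, and A_{n+1} is a
prefix of it of length 2^{n+1} > n. -/
def D (n : ℕ) : Letter := (A (n + 1)).getD n .a

/-- The finite segment D[i .. i+len−1] of the period-doubling sequence,
with 1-based starting position i. -/
def Dseg (i len : ℕ) : List Letter := (List.range len).map fun k => D (i - 1 + k)

/-- u occurs in the finite word w at (1-based) position i. -/
def OccursAt {α : Type*} (u w : List α) (i : ℕ) : Prop :=
  1 ≤ i ∧ i - 1 + u.length ≤ w.length ∧ (w.drop (i - 1)).take u.length = u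

/-- u is a factor of the finite word w. -/
def IsFactor {α : Type*} (u w : List α) : Prop := ∃ i, OccursAt u w i

/-- u occurs in the period-doubling sequence D at (1-based) position i. -/
def DOccursAt (u : List Letter) (i : ℕ) : Prop := 1 ≤ i ∧ Dseg i u.length = u

/-- u is a factor of the period-doubling sequence D. -/
def FactorD (u : List Letter) : Prop := ∃ i, DOccursAt u i

/-- L(u,p): the starting position of the p-th occurrence (p ≥ 1) of u in D. -/
noncomputable def L (u : List Letter) (p : ℕ) : ℕ := Nat.nth (DOccursAt u) (p - 1)

/-- r_p(u): the p-th return word of u (p ≥ 1), i.e. D[L(u,p) .. L(u,p+1)−1];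
r_0(u) is the prefix of D preceding the first occurrence of u. -/
noncomputable def r (u : List Letter) (p : ℕ) : List Letter :=
  if p = 0 then Dseg 1 (L u 1 - 1) else Dseg (L u p) (L u (p + 1) - L u p)

/-- The morphism τ₁ : a ↦ a, b ↦ bb, extended to words. -/
def tau1 : List Letter → List Letter :=
  fun w => w.flatMap fun x => match x with
    | .a => [.a]
    | .b => [.b, .b]
    | .c => [.c]

/-- The morphism τ₂ : a ↦ ab, b ↦ acac, extended to words. -/
def tau2 : List Letter → List Letter :=
  fun w => w.flatMap fun x => match x with
    | .a => [.a, .b]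
    | .b => [.a, .c, .a, .c]
    | .c => [.c]

/-- Θ₁[p], the p-th letter (p ≥ 1) of Θ₁ = τ₁(D): since |τ₁(w)| ≥ |w|, the p-th
letter of Θ₁ is the p-th letter of the image of the length-p prefix of D. -/
def Theta1 (p : ℕ) : Letter := (tau1 (Dseg 1 p)).getD (p - 1) .a

/-- Θ₂[p], the p-th letter (p ≥ 1) of Θ₂ = τ₂(D). -/
def Theta2 (p : ℕ) : Letter := (tau2 (Dseg 1 p)).getD (p - 1) .a

/-- The envelope word E_{1,m} = A_m with its last letter δ_m deleted. -/
def E1 (m : ℕ) : List Letter := (A m).dropLast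

/-- The envelope word E_{2,m} = B_m B_{m−1} with its last letter δ_m deleted. -/
def E2 (m : ℕ) : List Letter := (B m ++ B (m - 1)).dropLast

/-- Enumeration of the envelope words in the order
E_{1,1} ⊏ E_{2,1} ⊏ E_{1,2} ⊏ E_{2,2} ⊏ …. -/
def Eword (k : ℕ) : List Letter := if k % 2 = 0 then E1 (k / 2 + 1) else E2 (k / 2 + 1)

/-- Env(u): the ⊏-least envelope word having u as a factor. -/
noncomputable def Env (u : List Letter) : List Letter :=
  Eword (sInf {k | IsFactor u (Eword k)})

/-- The letterwise complement exchanging a and b. -/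
def comp : Letter → Letter
  | .a => .b
  | .b => .a
  | .c => .c

/-!
Since `D = σ(D)`, the letter `D (2k)` is `a` and `D (2k+1)` is the complement of `D k`, so the
segment of `D` of length `2n` at position `2i - 1` is the σ-image of the segment of length `n` at
position `i`. For `m ≥ 1`, `E_{2,m+1} = σ(E_{2,m}) a` has second letter `b`, so it can only start at
odd positions, and (σ being injective on words over `{a, b}`) it occurs at `2i - 1` exactly when
`E_{2,m}` occurs at `i`. Hence the return words of `E_{2,m+1}` are the σ-images of those of
`E_{2,m}`, and σ maps `A_{m-1}`, `A_{m-1} A_m B_{m+1}`, `B_m B_{m-1}` to the same words for `m + 1`.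

For `m = 1`, `E_{2,1} = aa`, and the segment of `D` of length 16 at position `8j + 1` is
`σ³(D j · D (j+1))`. If `D j = a` this block contributes two occurrences of `aa`, with return words
`a`, `aababab`; if `D j = b` it contributes four, with return words `a`, `aab`, `a`, `aab`. Read
through the dictionary `a ↦ a`, `b ↦ aababab`, `c ↦ aab` these are `τ₂(a) = ab` and
`τ₂(b) = acac`, so counting occurrences block by block matches the `p`-th return word with `Θ₂[p]`.
-/

lemma comp_involutive : Function.Involutive comp := fun x => by cases x <;> rfl

lemma sigmaw_append (u v : List Letter) : sigmaw (u ++ v) = sigmaw u ++ sigmaw v :=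
  List.flatMap_append

lemma sigmaw_cons_of_ne_c {x : Letter} (hx : x ≠ c) (t : List Letter) :
    sigmaw (x :: t) = a :: comp x :: sigmaw t := by
  cases x <;> first | rfl | exact absurd rfl hx

lemma c_notMem_sigmaw {w : List Letter} (hw : c ∉ w) : c ∉ sigmaw w := fun h => by
  obtain ⟨x, hx, hcx⟩ := List.mem_flatMap.1 h
  cases x <;> simp_all

lemma length_sigmaw {w : List Letter} (hw : c ∉ w) : (sigmaw w).length = 2 * w.length := by
  induction w with
  | nil => rfl
  | cons x t ih =>
    rw [List.mem_cons, not_or] at hw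
    simp only [sigmaw_cons_of_ne_c (Ne.symm hw.1), List.length_cons, ih hw.2]
    ring

lemma eq_of_sigmaw_eq {u v : List Letter} (hu : c ∉ u) (hv : c ∉ v)
    (h : sigmaw u = sigmaw v) : u = v := by
  induction u generalizing v with
  | nil =>
    cases v with
    | nil => rfl
    | cons y t =>
      rw [sigmaw_cons_of_ne_c (fun hy => hv (hy ▸ List.mem_cons_self))] at h
      exact absurd h.symm (List.cons_ne_nil _ _)
  | cons x t ih =>
    rw [List.mem_cons, not_or] at hu
    cases v with
    | nil =>
      rw [sigmaw_cons_of_ne_c (Ne.symm hu.1)] at h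
      exact absurd h (List.cons_ne_nil _ _)
    | cons y s =>
      rw [List.mem_cons, not_or] at hv
      rw [sigmaw_cons_of_ne_c (Ne.symm hu.1), sigmaw_cons_of_ne_c (Ne.symm hv.1)] at h
      simp only [List.cons.injEq, true_and] at h
      rw [comp_involutive.injective h.1, ih hu.2 hv.2 h.2]

lemma getD_sigmaw {w : List Letter} (hw : c ∉ w) {k : ℕ} (hk : k < w.length) :
    (sigmaw w).getD (2 * k) a = a ∧ (sigmaw w).getD (2 * k + 1) a = comp (w.getD k a) := by
  induction w generalizing k with
  | nil => simp at hk
  | cons x t ih =>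
    rw [List.mem_cons, not_or] at hw
    rw [sigmaw_cons_of_ne_c (Ne.symm hw.1)]
    cases k with
    | zero => simp
    | succ k =>
      rw [List.length_cons] at hk
      simpa [Nat.mul_succ] using ih hw.2 (by omega)

lemma c_notMem_iterate_sigmaw {w : List Letter} (hw : c ∉ w) (m : ℕ) : c ∉ sigmaw^[m] w := by
  induction m with
  | zero => exact hw
  | succ m ih => exact Function.iterate_succ_apply' sigmaw m w ▸ c_notMem_sigmaw ih

lemma length_iterate_sigmaw {w : List Letter} (hw : c ∉ w) (m : ℕ) :
    (sigmaw^[m] w).length = 2 ^ m * w.length := by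
  induction m with
  | zero => simp
  | succ m ih =>
    rw [Function.iterate_succ_apply', length_sigmaw (c_notMem_iterate_sigmaw hw m), ih, pow_succ]
    ring

lemma iterate_sigmaw_append (m : ℕ) (u v : List Letter) :
    sigmaw^[m] (u ++ v) = sigmaw^[m] u ++ sigmaw^[m] v := by
  induction m generalizing u v with
  | zero => rfl
  | succ m ih => rw [Function.iterate_succ_apply, sigmaw_append, ih]; rfl

lemma A_succ (m : ℕ) : A (m + 1) = sigmaw (A m) := Function.iterate_succ_apply' _ _ _

lemma B_succ (m : ℕ) : B (m + 1) = sigmaw (B m) := Function.iterate_succ_apply' _ _ _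

lemma A_succ_eq_append (m : ℕ) : A (m + 1) = A m ++ B m :=
  (Function.iterate_succ_apply _ _ _).trans (iterate_sigmaw_append m [a] [b])

lemma B_succ_eq_append (m : ℕ) : B (m + 1) = A m ++ A m :=
  (Function.iterate_succ_apply _ _ _).trans (iterate_sigmaw_append m [a] [a])

lemma c_notMem_A (m : ℕ) : c ∉ A m := c_notMem_iterate_sigmaw (by decide) m

lemma c_notMem_B (m : ℕ) : c ∉ B m := c_notMem_iterate_sigmaw (by decide) m

lemma length_A (m : ℕ) : (A m).length = 2 ^ m :=
  (length_iterate_sigmaw (w := [a]) (by decide) m).trans (mul_one _)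

lemma A_prefix_of_le {m n : ℕ} (h : m ≤ n) : A m <+: A n := by
  induction n, h using Nat.le_induction with
  | base => exact List.prefix_refl _
  | succ n _ ih => exact ih.trans (A_succ_eq_append n ▸ List.prefix_append _ _)

lemma D_eq_getD_A {n M : ℕ} (h : n < 2 ^ M) : D n = (A M).getD n a := by
  have hlen (k : ℕ) (hk : n < 2 ^ k) : n < (A k).length := (length_A k).symm ▸ hk
  have hn : n < 2 ^ (n + 1) := Nat.lt_two_pow_self.trans (Nat.pow_lt_pow_succ one_lt_two)
  rcases le_total (n + 1) M with hM | hM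
  · obtain ⟨t, ht⟩ := A_prefix_of_le hM
    rw [D, ← ht, List.getD_append _ _ _ _ (hlen _ hn)]
  · obtain ⟨t, ht⟩ := A_prefix_of_le hM
    rw [D, ← ht, List.getD_append _ _ _ _ (hlen _ h)]

lemma D_ne_c (n : ℕ) : D n ≠ c := by
  intro h
  rw [D, List.getD_eq_getElem?_getD, Option.getD_eq_iff] at h
  rcases h with h | ⟨-, h⟩
  · exact c_notMem_A (n + 1) (List.mem_of_getElem? h)
  · exact absurd h (by decide)

lemma D_two_mul (k : ℕ) : D (2 * k) = a := by
  have hk : k < 2 ^ k := Nat.lt_two_pow_self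
  rw [D_eq_getD_A (M := k + 1) (by rw [pow_succ]; omega), A_succ]
  exact (getD_sigmaw (c_notMem_A _) ((length_A _).symm ▸ hk)).1

lemma D_two_mul_add_one (k : ℕ) : D (2 * k + 1) = comp (D k) := by
  have hk : k < 2 ^ k := Nat.lt_two_pow_self
  rw [D_eq_getD_A (M := k + 1) (by rw [pow_succ]; omega), A_succ, D_eq_getD_A hk]
  exact (getD_sigmaw (c_notMem_A _) ((length_A _).symm ▸ hk)).2

lemma length_Dseg (i len : ℕ) : (Dseg i len).length = len := by simp [Dseg]

lemma c_notMem_Dseg (i len : ℕ) : c ∉ Dseg i len := by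
  simpa [Dseg, eq_comm] using fun k _ => D_ne_c (i - 1 + k)

lemma Dseg_one (i : ℕ) : Dseg i 1 = [D (i - 1)] := rfl

lemma Dseg_add {i : ℕ} (hi : 1 ≤ i) (l₁ l₂ : ℕ) :
    Dseg i (l₁ + l₂) = Dseg i l₁ ++ Dseg (i + l₁) l₂ := by
  simp only [Dseg, List.range_add, List.map_append, List.map_map]
  congr 2
  ext k
  simp only [Function.comp_apply]
  congr 1
  omega

lemma Dseg_add_eq_take_drop {i : ℕ} (hi : 1 ≤ i) {d len n : ℕ} (h : d + len ≤ n) :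
    Dseg (i + d) len = ((Dseg i n).drop d).take len := by
  obtain ⟨e, rfl⟩ := Nat.exists_eq_add_of_le h
  rw [Dseg_add hi, Dseg_add hi, List.append_assoc, List.drop_left' (length_Dseg _ _),
    List.take_left' (length_Dseg _ _)]

lemma Dseg_two_mul_sub_one {i : ℕ} (hi : 1 ≤ i) (len : ℕ) :
    Dseg (2 * i - 1) (2 * len) = sigmaw (Dseg i len) := by
  induction len with
  | zero => rfl
  | succ len ih =>
    have hpair : Dseg (2 * i - 1 + 2 * len) 2 = [a, comp (D (i - 1 + len))] := by
      rw [← D_two_mul (i - 1 + len), ← D_two_mul_add_one]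
      simp only [Dseg, show List.range 2 = [0, 1] from rfl, List.map_cons, List.map_nil]
      rw [show 2 * i - 1 + 2 * len - 1 = 2 * (i - 1 + len) by omega, Nat.add_zero]
    rw [Nat.mul_succ, Dseg_add (by omega), ih, hpair, Dseg_add hi, sigmaw_append, Dseg_one,
      sigmaw_cons_of_ne_c (D_ne_c _), show i + len - 1 = i - 1 + len by omega]
    rfl

lemma Dseg_two_pow_mul {i : ℕ} (hi : 1 ≤ i) (m len : ℕ) :
    Dseg (2 ^ m * (i - 1) + 1) (2 ^ m * len) = sigmaw^[m] (Dseg i len) := by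
  induction m with
  | zero => simp [Nat.sub_add_cancel hi]
  | succ m ih =>
    rw [Function.iterate_succ_apply', ← ih, ← Dseg_two_mul_sub_one (by omega), pow_succ',
      mul_assoc, mul_assoc]
    congr 1

instance (u : List Letter) : DecidablePred (DOccursAt u) := fun i =>
  inferInstanceAs (Decidable (1 ≤ i ∧ Dseg i u.length = u))

instance {α : Type*} [DecidableEq α] (u w : List α) : DecidablePred (OccursAt u w) := fun _ =>
  inferInstanceAs (Decidable (_ ∧ _ ∧ _))

lemma count_congr {p q : ℕ → Prop} [DecidablePred p] [DecidablePred q] {n : ℕ}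
    (h : ∀ k < n, p k ↔ q k) : Nat.count p n = Nat.count q n := by
  simp only [Nat.count_eq_card_filter_range]
  exact congrArg _ (Finset.filter_congr fun k hk => h k (Finset.mem_range.1 hk))

lemma r_eq_Dseg_nth (u : List Letter) {p : ℕ} (hp : 1 ≤ p) :
    r u p = Dseg (Nat.nth (DOccursAt u) (p - 1))
      (Nat.nth (DOccursAt u) p - Nat.nth (DOccursAt u) (p - 1)) := by
  rw [r, if_neg (by omega), L, L, Nat.add_sub_cancel]

lemma DOccursAt_add_iff_OccursAt_Dseg {i : ℕ} (hi : 1 ≤ i) {u : List Letter} {k n : ℕ}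
    (h : k + u.length ≤ n) : DOccursAt u (i + k) ↔ OccursAt u (Dseg i n) (k + 1) := by
  rw [DOccursAt, OccursAt, Nat.add_sub_cancel, length_Dseg, ← Dseg_add_eq_take_drop hi h]
  simp only [h, true_and]
  exact and_congr_left' (iff_of_true (by omega) (by omega))

lemma DOccursAt_sigmaw_append_a_iff {u : List Letter} (hu : c ∉ u) (i : ℕ) :
    DOccursAt (sigmaw u ++ [a]) (2 * i - 1) ↔ DOccursAt u i := by
  rcases Nat.eq_zero_or_pos i with rfl | hi
  · simp [DOccursAt]
  · have hlast : Dseg (2 * i - 1 + 2 * u.length) 1 = [a] := by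
      rw [Dseg_one, show 2 * i - 1 + 2 * u.length - 1 = 2 * (i - 1 + u.length) by omega,
        D_two_mul]
    unfold DOccursAt
    rw [List.length_append, length_sigmaw hu, List.length_singleton, Dseg_add (by omega),
      Dseg_two_mul_sub_one hi, hlast, List.append_cancel_right_eq]
    exact and_congr (by omega) ⟨eq_of_sigmaw_eq (c_notMem_Dseg _ _) hu, congrArg sigmaw⟩

lemma exists_two_mul_sub_one_eq_of_DOccursAt {t : List Letter} {s : ℕ}
    (hs : DOccursAt (sigmaw (a :: t) ++ [a]) s) : ∃ i, 2 * i - 1 = s := by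
  have hb : D (s - 1 + 1) = b := by
    have h := congrArg (·[1]?) hs.2
    simpa [Dseg, sigmaw_cons_of_ne_c, comp] using h
  rw [Nat.sub_add_cancel hs.1] at hb
  obtain ⟨k, rfl | rfl⟩ := Nat.even_or_odd' s
  · rw [D_two_mul] at hb
    exact absurd hb (by decide)
  · exact ⟨k + 1, by omega⟩

lemma strictMono_two_mul_sub_one : StrictMono fun i : ℕ => 2 * i - 1 :=
  fun i j h => by dsimp only; omega

lemma nth_DOccursAt_sigmaw_append_a {t : List Letter} (ht : c ∉ t)
    (hinf : (Set.ofPred (DOccursAt (sigmaw (a :: t) ++ [a]))).Infinite) (n : ℕ) :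
    Nat.nth (DOccursAt (sigmaw (a :: t) ++ [a])) n = 2 * Nat.nth (DOccursAt (a :: t)) n - 1 := by
  have hcomp : (fun i => DOccursAt (sigmaw (a :: t) ++ [a]) (2 * i - 1)) = DOccursAt (a :: t) :=
    funext fun i => propext (DOccursAt_sigmaw_append_a_iff (by simpa using ht) i)
  have key := Nat.nth_comp_of_strictMono (p := DOccursAt (sigmaw (a :: t) ++ [a])) (n := n)
    strictMono_two_mul_sub_one
    (fun s hs => exists_two_mul_sub_one_eq_of_DOccursAt hs) (fun hfin => absurd hfin hinf)
  rw [← key, hcomp]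

lemma infinite_DOccursAt_sigmaw_append_a {u : List Letter} (hu : c ∉ u)
    (hinf : (Set.ofPred (DOccursAt u)).Infinite) :
    (Set.ofPred (DOccursAt (sigmaw u ++ [a]))).Infinite :=
  ((hinf.image strictMono_two_mul_sub_one.injective.injOn).mono
    (by rintro _ ⟨i, hi, rfl⟩; exact (DOccursAt_sigmaw_append_a_iff hu i).2 hi))

lemma r_sigmaw_append_a {t : List Letter} (ht : c ∉ t)
    (hinf : (Set.ofPred (DOccursAt (a :: t))).Infinite) {p : ℕ} (hp : 1 ≤ p) :
    r (sigmaw (a :: t) ++ [a]) p = sigmaw (r (a :: t) p) := by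
  have hat : c ∉ a :: t := by simpa using ht
  have hinf' := infinite_DOccursAt_sigmaw_append_a hat hinf
  rw [r_eq_Dseg_nth _ hp, r_eq_Dseg_nth _ hp, nth_DOccursAt_sigmaw_append_a ht hinf',
    nth_DOccursAt_sigmaw_append_a ht hinf']
  have hpos : 1 ≤ Nat.nth (DOccursAt (a :: t)) (p - 1) := (Nat.nth_mem_of_infinite hinf _).1
  have hlt := (Nat.nth_lt_nth hinf).2 (show p - 1 < p by omega)
  set x := Nat.nth (DOccursAt (a :: t)) (p - 1)
  set y := Nat.nth (DOccursAt (a :: t)) p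
  rw [show 2 * y - 1 - (2 * x - 1) = 2 * (y - x) by omega, Dseg_two_mul_sub_one hpos]

lemma E2_succ_succ (k : ℕ) : E2 (k + 2) = sigmaw (E2 (k + 1)) ++ [a] := by
  have hA : A k ≠ [] := List.ne_nil_of_length_pos (by rw [length_A]; positivity)
  have hne : B (k + 1) ++ B k ≠ [] := by simp [B_succ_eq_append, hA]
  obtain ⟨w, x, hwx⟩ := (List.eq_nil_or_concat _).resolve_left hne
  rw [List.concat_eq_append] at hwx
  have hx : x ≠ c := by
    rintro rfl
    have hmem : c ∈ B (k + 1) ++ B k := hwx ▸ List.mem_concat_self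
    rw [List.mem_append] at hmem
    exact hmem.elim (c_notMem_B _) (c_notMem_B _)
  have hE : E2 (k + 1) = w := by
    rw [E2, Nat.add_sub_cancel, hwx, List.dropLast_concat]
  have hσ : B (k + 2) ++ B (k + 1) = sigmaw (B (k + 1) ++ B k) := by
    rw [sigmaw_append, ← B_succ, ← B_succ]
  rw [E2, show k + 2 - 1 = k + 1 by omega, hσ, hwx, sigmaw_append, sigmaw_cons_of_ne_c hx, hE,
    List.dropLast_append_of_ne_nil (List.cons_ne_nil _ _)]
  rfl

lemma c_notMem_E2 (m : ℕ) : c ∉ E2 m := fun h => by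
  rcases List.mem_append.1 ((List.dropLast_sublist _).subset h) with h | h
  · exact c_notMem_B _ h
  · exact c_notMem_B _ h

lemma exists_E2_eq_a_cons {m : ℕ} (hm : 1 ≤ m) : ∃ t, E2 m = a :: t := by
  induction m, hm using Nat.le_induction with
  | base => exact ⟨[a], rfl⟩
  | succ m hm ih =>
    obtain ⟨k, rfl⟩ := Nat.exists_eq_add_of_le' hm
    obtain ⟨t, ht⟩ := ih
    exact ⟨_, by rw [E2_succ_succ, ht, sigmaw_cons_of_ne_c (by decide)]; rfl⟩

def returnWordE2 (m : ℕ) : Letter → List Letter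
  | a => A (m - 1)
  | b => A (m - 1) ++ A m ++ B (m + 1)
  | c => B m ++ B (m - 1)

lemma returnWordE2_succ {m : ℕ} (hm : 1 ≤ m) (x : Letter) :
    returnWordE2 (m + 1) x = sigmaw (returnWordE2 m x) := by
  obtain ⟨k, rfl⟩ := Nat.exists_eq_add_of_le' hm
  cases x <;> simp only [returnWordE2, Nat.add_sub_cancel, sigmaw_append, A_succ, B_succ]

lemma exists_le_lt_succ_of_strictMono {f : ℕ → ℕ} (hf : StrictMono f) (h0 : f 0 = 0) (n : ℕ) :
    ∃ j, f j ≤ n ∧ n < f (j + 1) := by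
  have hex : ∃ k, n < f k := ⟨n + 1, Nat.lt_of_lt_of_le n.lt_succ_self (hf.id_le _)⟩
  have hpos : Nat.find hex ≠ 0 := fun h => by
    simpa [h, h0] using Nat.find_spec hex
  obtain ⟨j, hj⟩ := Nat.exists_eq_succ_of_ne_zero hpos
  exact ⟨j, not_lt.1 (Nat.find_min hex (hj ▸ j.lt_succ_self)), by
    rw [← Nat.succ_eq_add_one, ← hj]; exact Nat.find_spec hex⟩

lemma length_tau2_pos (x : Letter) : 0 < (tau2 [x]).length := by
  cases x <;> decide

lemma length_tau2_Dseg_succ (j : ℕ) :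
    (tau2 (Dseg 1 (j + 1))).length = (tau2 (Dseg 1 j)).length + (tau2 [D j]).length := by
  rw [Dseg_add le_rfl j 1, tau2, List.flatMap_append, List.length_append, Dseg_one,
    Nat.add_sub_cancel_left]
  rfl

lemma strictMono_length_tau2_Dseg : StrictMono fun j => (tau2 (Dseg 1 j)).length :=
  strictMono_nat_of_lt_succ fun j => by
    simpa only [length_tau2_Dseg_succ] using Nat.lt_add_of_pos_right (length_tau2_pos (D j))

lemma Theta2_eq_getD_tau2 {p j : ℕ} (hp : 1 ≤ p) (hj : (tau2 (Dseg 1 j)).length ≤ p - 1)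
    (hlt : p - 1 < (tau2 (Dseg 1 (j + 1))).length) :
    Theta2 p = (tau2 [D j]).getD (p - 1 - (tau2 (Dseg 1 j)).length) a := by
  have hjp : j + 1 ≤ p := by
    have : j ≤ (tau2 (Dseg 1 j)).length := strictMono_length_tau2_Dseg.id_le j
    omega
  obtain ⟨e, rfl⟩ := Nat.exists_eq_add_of_le hjp
  have hsplit : tau2 (Dseg 1 (j + 1)) = tau2 (Dseg 1 j) ++ tau2 [D j] := by
    rw [Dseg_add le_rfl j 1, tau2, List.flatMap_append, Dseg_one, Nat.add_sub_cancel_left]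
    rfl
  rw [Theta2, Dseg_add le_rfl (j + 1) e, tau2, List.flatMap_append, ← tau2,
    List.getD_append _ _ _ _ hlt, hsplit, List.getD_append_right _ _ _ _ hj]

def blockWord (x y : Letter) : List Letter := sigmaw^[3] [x, y]

lemma Dseg_eight_mul_add_one (j : ℕ) : Dseg (8 * j + 1) 16 = blockWord (D j) (D (j + 1)) := by
  have h := Dseg_two_pow_mul (i := j + 1) (by omega) 3 2
  rw [Nat.add_sub_cancel] at h
  rw [show 8 * j + 1 = 2 ^ 3 * j + 1 by norm_num, show 16 = 2 ^ 3 * 2 by norm_num, h]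
  simp [Dseg, blockWord, List.range_succ]

/-- For `x ≠ c`: the offsets of the occurrences of `aa` starting in the first half `σ³(x)` of
`blockWord x y`, followed by the offset `10 = 8 + 2` of the first one starting in the second half. -/
def aaOffset (x : Letter) (o : ℕ) : ℕ :=
  (match x with
    | b => [2, 3, 6, 7, 10]
    | _ => [2, 3, 10]).getD o 0

lemma aaOffset_zero (x : Letter) : aaOffset x 0 = 2 := by
  cases x <;> rfl

lemma aaOffset_le {x : Letter} (hx : x ≠ c) {o : ℕ} (ho : o ≤ (tau2 [x]).length) :
    aaOffset x o ≤ 10 := by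
  revert o
  cases x <;> first | exact absurd rfl hx | decide

lemma aaOffset_length_tau2 {x : Letter} (hx : x ≠ c) : aaOffset x (tau2 [x]).length = 10 := by
  cases x <;> first | exact absurd rfl hx | decide

lemma count_OccursAt_aa_blockWord {x y : Letter} (hx : x ≠ c) (hy : y ≠ c) {o : ℕ}
    (ho : o < (tau2 [x]).length) :
    Nat.count (fun k => OccursAt [a, a] (blockWord x y) (k + 1)) (aaOffset x o) = o := by
  revert o
  cases x <;> cases y <;> first | exact absurd rfl ‹_› | decide

lemma count_OccursAt_aa_blockWord_eight {x y : Letter} (hx : x ≠ c) (hy : y ≠ c) :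
    Nat.count (fun k => OccursAt [a, a] (blockWord x y) (k + 1)) 8 = (tau2 [x]).length := by
  cases x <;> cases y <;> first | exact absurd rfl ‹_› | decide

lemma OccursAt_aa_blockWord {x y : Letter} (hx : x ≠ c) (hy : y ≠ c) {o : ℕ}
    (ho : o < (tau2 [x]).length) : OccursAt [a, a] (blockWord x y) (aaOffset x o + 1) := by
  revert o
  cases x <;> cases y <;> first | exact absurd rfl ‹_› | decide

lemma take_drop_blockWord {x y : Letter} (hx : x ≠ c) (hy : y ≠ c) {o : ℕ}
    (ho : o < (tau2 [x]).length) :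
    ((blockWord x y).drop (aaOffset x o)).take (aaOffset x (o + 1) - aaOffset x o) =
      returnWordE2 1 ((tau2 [x]).getD o a) := by
  revert o
  cases x <;> cases y <;> first | exact absurd rfl ‹_› | decide

lemma DOccursAt_aa_iff_blockWord (j : ℕ) {k : ℕ} (hk : k ≤ 14) :
    DOccursAt [a, a] (8 * j + 1 + k) ↔ OccursAt [a, a] (blockWord (D j) (D (j + 1))) (k + 1) := by
  rw [← Dseg_eight_mul_add_one]
  exact DOccursAt_add_iff_OccursAt_Dseg (by omega) (by simpa using hk)

lemma count_DOccursAt_aa_add (j : ℕ) {e : ℕ} (he : e ≤ 14) :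
    Nat.count (DOccursAt [a, a]) (8 * j + 1 + e) = Nat.count (DOccursAt [a, a]) (8 * j + 1) +
      Nat.count (fun k => OccursAt [a, a] (blockWord (D j) (D (j + 1))) (k + 1)) e := by
  rw [Nat.count_add, count_congr fun k hk => DOccursAt_aa_iff_blockWord j (by omega)]

lemma count_DOccursAt_aa (j : ℕ) :
    Nat.count (DOccursAt [a, a]) (8 * j + 1) = (tau2 (Dseg 1 j)).length := by
  induction j with
  | zero => simp [Nat.count_succ, DOccursAt, Dseg, tau2]
  | succ j ih =>
    rw [show 8 * (j + 1) + 1 = 8 * j + 1 + 8 by ring, count_DOccursAt_aa_add j (by norm_num), ih,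
      count_OccursAt_aa_blockWord_eight (D_ne_c _) (D_ne_c _), length_tau2_Dseg_succ]

lemma DOccursAt_aa_aaOffset (j : ℕ) {o : ℕ} (ho : o < (tau2 [D j]).length) :
    DOccursAt [a, a] (8 * j + 1 + aaOffset (D j) o) :=
  (DOccursAt_aa_iff_blockWord j (by linarith [aaOffset_le (D_ne_c j) ho.le])).2
    (OccursAt_aa_blockWord (D_ne_c _) (D_ne_c _) ho)

lemma nth_DOccursAt_aa_of_lt (j : ℕ) {o : ℕ} (ho : o < (tau2 [D j]).length) :
    Nat.nth (DOccursAt [a, a]) ((tau2 (Dseg 1 j)).length + o) = 8 * j + 1 + aaOffset (D j) o := by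
  have hoff := aaOffset_le (D_ne_c j) ho.le
  rw [← Nat.nth_count (DOccursAt_aa_aaOffset j ho), count_DOccursAt_aa_add j (by omega),
    count_DOccursAt_aa, count_OccursAt_aa_blockWord (D_ne_c _) (D_ne_c _) ho]

lemma nth_DOccursAt_aa (j : ℕ) {o : ℕ} (ho : o ≤ (tau2 [D j]).length) :
    Nat.nth (DOccursAt [a, a]) ((tau2 (Dseg 1 j)).length + o) = 8 * j + 1 + aaOffset (D j) o := by
  rcases ho.lt_or_eq with ho | rfl
  · exact nth_DOccursAt_aa_of_lt j ho
  · rw [← length_tau2_Dseg_succ, ← add_zero (tau2 (Dseg 1 (j + 1))).length,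
      nth_DOccursAt_aa_of_lt (j + 1) (length_tau2_pos _), aaOffset_zero,
      aaOffset_length_tau2 (D_ne_c j)]
    ring

lemma infinite_DOccursAt_aa : (Set.ofPred (DOccursAt [a, a])).Infinite := by
  refine Set.infinite_of_injective_forall_mem (f := fun j => 8 * j + 3)
    (fun i j h => by simp only at h; omega) fun j => ?_
  simpa [aaOffset_zero] using DOccursAt_aa_aaOffset j (length_tau2_pos _)

lemma r_E2_one {p : ℕ} (hp : 1 ≤ p) : r (E2 1) p = returnWordE2 1 (Theta2 p) := by
  obtain ⟨j, hj, hlt⟩ := exists_le_lt_succ_of_strictMono strictMono_length_tau2_Dseg rfl (p - 1)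
  obtain ⟨o, ho⟩ := Nat.exists_eq_add_of_le hj
  have hlt' := hlt
  rw [length_tau2_Dseg_succ] at hlt'
  have hoff₀ := aaOffset_le (D_ne_c j) (o := o) (by omega)
  have hoff₁ := aaOffset_le (D_ne_c j) (o := o + 1) (by omega)
  rw [Theta2_eq_getD_tau2 hp hj hlt, r_eq_Dseg_nth _ hp, show E2 1 = [a, a] from rfl, ho,
    show p = (tau2 (Dseg 1 j)).length + (o + 1) by omega, nth_DOccursAt_aa j (by omega),
    nth_DOccursAt_aa j (by omega), Nat.add_sub_add_left,
    Dseg_add_eq_take_drop (n := 16) (by omega) (by omega), Dseg_eight_mul_add_one,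
    take_drop_blockWord (D_ne_c _) (D_ne_c _) (by omega), Nat.add_sub_cancel_left]

lemma infinite_DOccursAt_E2 {m : ℕ} (hm : 1 ≤ m) : (Set.ofPred (DOccursAt (E2 m))).Infinite := by
  induction m, hm using Nat.le_induction with
  | base => exact infinite_DOccursAt_aa
  | succ m hm ih =>
    obtain ⟨k, rfl⟩ := Nat.exists_eq_add_of_le' hm
    rw [E2_succ_succ]
    exact infinite_DOccursAt_sigmaw_append_a (c_notMem_E2 _) ih

lemma r_E2_succ {m : ℕ} (hm : 1 ≤ m) {p : ℕ} (hp : 1 ≤ p) :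
    r (E2 (m + 1)) p = sigmaw (r (E2 m) p) := by
  obtain ⟨k, rfl⟩ := Nat.exists_eq_add_of_le' hm
  obtain ⟨t, ht⟩ := exists_E2_eq_a_cons hm
  have hinf := infinite_DOccursAt_E2 hm
  rw [ht] at hinf
  have htc : c ∉ t := fun h => c_notMem_E2 (k + 1) (ht ▸ List.mem_cons_of_mem a h)
  rw [E2_succ_succ, ht, r_sigmaw_append_a htc hinf hp]

lemma r_E2 {m : ℕ} (hm : 1 ≤ m) {p : ℕ} (hp : 1 ≤ p) :
    r (E2 m) p = returnWordE2 m (Theta2 p) := by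
  induction m, hm using Nat.le_induction with
  | base => exact r_E2_one hp
  | succ m hm ih => rw [r_E2_succ hm hp, ih, returnWordE2_succ hm]

/-- For every m ≥ 1 and p ≥ 1, the p-th return word of E_{2,m} in D is
A_{m−1} if Θ₂[p] = a, A_{m−1} A_m B_{m+1} if Θ₂[p] = b, and B_m B_{m−1} if Θ₂[p] = c;
i.e. {r_p(E_{2,m})}_{p≥1} is Θ₂ over the alphabet {A_{m−1}, A_{m−1}A_mB_{m+1}, B_mB_{m−1}}. -/
theorem return_words_of_E2 (m : ℕ) (hm : 1 ≤ m) (p : ℕ) (hp : 1 ≤ p) :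
    (Theta2 p = .a → r (E2 m) p = A (m - 1)) ∧
    (Theta2 p = .b → r (E2 m) p = A (m - 1) ++ A m ++ B (m + 1)) ∧
    (Theta2 p = .c → r (E2 m) p = B m ++ B (m - 1)) := by
  rw [r_E2 hm hp]
  exact ⟨fun h => by rw [h]; rfl, fun h => by rw [h]; rfl, fun h => by rw [h]; rfl⟩
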